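/- arXiv:1810.09680 — 10 statements merged into one kernel-verified Lean document; each statement's English description precedes it below -/
import Mathlib

section
/- If U is a selective ultrafilter on ω (i.e., for every decreasing sequence (Y_n) of sets in U there exists X = {x_0 < x_1 < ...} ∈ U with X ⊆ Y_0 and X \ (x_n + 1) ⊆ Y_{x_n} for all n), then for every 2-coloring c of the unordered pairs of ω there is a set X ∈ U all of whose pairs receive the same color. -/
open Set Filter

/-- `U` is a selective ultrafilter: for every decreasing sequence `(Y n)` of members of `U`
there is `X = range e ∈ U` enumerated increasingly with `X ⊆ Y 0` and
`X \ (e n + 1) ⊆ Y (e n)` for every `n`. -/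
def IsSelectiveUltra (U : Ultrafilter ℕ) : Prop :=
  ∀ Y : ℕ → Set ℕ, (∀ n, Y n ∈ U) → (∀ n, Y (n + 1) ⊆ Y n) →
    ∃ e : ℕ → ℕ, StrictMono e ∧ Set.range e ∈ U ∧ Set.range e ⊆ Y 0 ∧
      ∀ n m : ℕ, e n < e m → e m ∈ Y (e n)

/-! Colour each `a` by the colour `col a` that `c a b` takes for `U`-almost all `b`.
Selectivity, applied to the partial intersections of the sets `{b | c a b = col a}`,
yields `X ∈ U` on which `c a b = col a` whenever `a < b`; shrinking `X` to the
`U`-large fibre of `col` makes the colouring constant. -/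

theorem Ultrafilter.exists_eventually_eq {α β : Type*} [Finite β] (U : Ultrafilter α)
    (f : α → β) : ∃ b, ∀ᶠ x in U, f x = b := by
  obtain ⟨b, hb⟩ := (U.map f).eq_pure_of_finite
  exact ⟨b, Ultrafilter.mem_map.1 (hb ▸ rfl : ({b} : Set β) ∈ U.map f)⟩

namespace IsSelectiveUltra

variable {U : Ultrafilter ℕ}

theorem exists_mem_forall_lt_mem (hU : IsSelectiveUltra U) (A : ℕ → Set ℕ)
    (hA : ∀ n, A n ∈ U) : ∃ X ∈ U, ∀ a ∈ X, ∀ b ∈ X, a < b → b ∈ A a := by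
  obtain ⟨e, -, he, -, hlt⟩ := hU (fun n => ⋂ k ∈ Finset.Iic n, A k)
    (fun n => (biInter_finset_mem _).2 fun k _ => hA k)
    (fun n => biInter_subset_biInter_left
      (by exact_mod_cast Finset.Iic_subset_Iic.2 n.le_succ))
  refine ⟨range e, he, ?_⟩
  rintro _ ⟨n, rfl⟩ _ ⟨m, rfl⟩ hnm
  exact mem_iInter₂.1 (hlt n m hnm) (e n) (Finset.mem_Iic.2 le_rfl)

theorem exists_mem_forall_lt_eq {β : Type*} [Finite β] (hU : IsSelectiveUltra U)
    (c : ℕ → ℕ → β) : ∃ X ∈ U, ∃ i, ∀ a ∈ X, ∀ b ∈ X, a < b → c a b = i := by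
  choose col hcol using fun a => U.exists_eventually_eq (c a)
  obtain ⟨X, hXU, hX⟩ := hU.exists_mem_forall_lt_mem _ hcol
  obtain ⟨i, hi⟩ := U.exists_eventually_eq col
  refine ⟨X ∩ {a | col a = i}, inter_mem hXU hi, i, ?_⟩
  rintro a ⟨haX, rfl⟩ b ⟨hbX, -⟩ hab
  exact hX a haX b hbX hab

end IsSelectiveUltra

theorem selective_ultrafilter_is_ramsey_general (U : Ultrafilter ℕ)
    (hsel : IsSelectiveUltra U)
    (c : ℕ → ℕ → Fin 2) (hsymm : ∀ a b : ℕ, c a b = c b a) :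
    ∃ X ∈ U, ∃ i : Fin 2, ∀ a ∈ X, ∀ b ∈ X, a ≠ b → c a b = i := by
  obtain ⟨X, hXU, i, hX⟩ := hsel.exists_mem_forall_lt_eq c
  refine ⟨X, hXU, i, fun a ha b hb hab => ?_⟩
  rcases hab.lt_or_gt with hlt | hgt
  · exact hX a ha b hb hlt
  · exact hsymm a b ▸ hX b hb a ha hgt

/-- Every selective ultrafilter is Ramsey: every 2-coloring of pairs has a
monochromatic set in the ultrafilter. -/
theorem selective_ultrafilter_is_ramsey (U : Ultrafilter ℕ)
    (hfree : ∀ n : ℕ, ({n} : Set ℕ) ∉ U)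
    (hsel : IsSelectiveUltra U)
    (c : ℕ → ℕ → Fin 2) (hsymm : ∀ a b : ℕ, c a b = c b a) :
    ∃ X ∈ U, ∃ i : Fin 2, ∀ a ∈ X, ∀ b ∈ X, a ≠ b → c a b = i :=
  selective_ultrafilter_is_ramsey_general U hsel c hsymm
end

section
/- There is no ideal on ω that is a Gδ subset of the Cantor space 2^ω (identifying subsets of ω with their characteristic functions). -/
/-!
If an ideal `I` were Gδ, then so would be its dual filter `{A | Aᶜ ∈ I}`, the preimage of `I`
under the complementation homeomorphism of `2^ω`. Both are dense: `I` contains all finite sets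
and the dual filter all cofinite sets, and these realise every finite pattern of bits. By the
Baire category theorem they meet, giving `A ∈ I` with `Aᶜ ∈ I`, whence `ω = A ∪ Aᶜ ∈ I`.
-/

open Set Filter
open scoped Classical

/-- Characteristic function, identifying `P(ω)` with the Cantor space `2^ω`. -/
noncomputable def chi (A : Set ℕ) : ℕ → Bool := fun n => if n ∈ A then true else false

/-- An ideal on ω: contains all finite sets, closed under subsets and finite unions,
and proper. -/
def IsIdealOnNat (I : Set (Set ℕ)) : Prop :=
  (∀ A : Set ℕ, A.Finite → A ∈ I) ∧
  (∀ A B : Set ℕ, A ∈ I → B ⊆ A → B ∈ I) ∧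
  (∀ A B : Set ℕ, A ∈ I → B ∈ I → A ∪ B ∈ I) ∧
  (Set.univ : Set ℕ) ∉ I

theorem dense_of_forall_finite_agree {ι : Type*} {X : ι → Type*} [∀ i, TopologicalSpace (X i)]
    {S : Set (∀ i, X i)}
    (h : ∀ (x : ∀ i, X i) (F : Set ι), F.Finite → ∃ y ∈ S, ∀ i ∈ F, y i = x i) : Dense S := by
  intro x
  rw [mem_closure_iff_nhds]
  intro U hU
  rw [nhds_pi, Filter.mem_pi] at hU
  obtain ⟨F, hF, t, ht, hFt⟩ := hU
  obtain ⟨y, hyS, hyx⟩ := h x F hF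
  refine ⟨y, hFt fun i hi => ?_, hyS⟩
  rw [hyx i hi]
  exact mem_of_mem_nhds (ht i)

theorem chi_apply_eq_true_iff (A : Set ℕ) (n : ℕ) : chi A n = true ↔ n ∈ A := by
  simp [chi]

theorem chi_injective : Function.Injective chi := fun A B hAB =>
  Set.ext fun n => by rw [← chi_apply_eq_true_iff, hAB, chi_apply_eq_true_iff]

theorem chi_compl (A : Set ℕ) : chi Aᶜ = fun n => !chi A n := by
  funext n
  by_cases hn : n ∈ A <;> simp [chi, hn]

theorem continuous_pi_not : Continuous fun (x : ℕ → Bool) n => !x n :=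
  continuous_pi fun n => (continuous_of_discreteTopology (f := not)).comp (continuous_apply n)

theorem dense_image_chi_of_finite_mem {S : Set (Set ℕ)} (hS : ∀ A : Set ℕ, A.Finite → A ∈ S) :
    Dense (chi '' S) := by
  refine dense_of_forall_finite_agree fun x F hF => ?_
  refine ⟨chi {n ∈ F | x n = true}, mem_image_of_mem _ (hS _ (hF.subset (sep_subset _ _))),
    fun n hn => ?_⟩
  cases hx : x n <;> simp [chi, hn, hx]

theorem dense_image_chi_of_cofinite_mem {S : Set (Set ℕ)}
    (hS : ∀ A : Set ℕ, Aᶜ.Finite → A ∈ S) : Dense (chi '' S) := by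
  refine dense_of_forall_finite_agree fun x F hF => ?_
  have hfin : ({n ∈ F | x n = false}ᶜᶜ : Set ℕ).Finite := by
    rw [compl_compl]
    exact hF.subset (sep_subset _ _)
  refine ⟨chi {n ∈ F | x n = false}ᶜ, mem_image_of_mem _ (hS _ hfin), fun n hn => ?_⟩
  cases hx : x n <;> simp [chi, hn, hx]

theorem image_chi_setOf_compl_mem (I : Set (Set ℕ)) :
    chi '' {A | Aᶜ ∈ I} = (fun x n => !x n) ⁻¹' (chi '' I) := by
  ext x
  constructor
  · rintro ⟨A, hA, rfl⟩
    exact ⟨Aᶜ, hA, chi_compl A⟩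
  · rintro ⟨B, hB, hBx⟩
    refine ⟨Bᶜ, by rwa [mem_ofPred_eq, compl_compl], ?_⟩
    rw [chi_compl, hBx]
    simp

/-- There is no ideal on ω that is a Gδ subset of the Cantor space. -/
theorem no_Gdelta_ideal :
    ¬ ∃ I : Set (Set ℕ), IsIdealOnNat I ∧ IsGδ (chi '' I) := by
  rintro ⟨I, ⟨hfin, -, hunion, hproper⟩, hGδ⟩
  have hdual : IsGδ (chi '' {A | Aᶜ ∈ I}) :=
    image_chi_setOf_compl_mem I ▸ hGδ.preimage continuous_pi_not
  have hdense : Dense (chi '' I ∩ chi '' {A | Aᶜ ∈ I}) :=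
    Dense.inter_of_Gδ hGδ hdual (dense_image_chi_of_finite_mem hfin)
      (dense_image_chi_of_cofinite_mem fun A hA => hfin _ hA)
  obtain ⟨_, ⟨A, hA, rfl⟩, ⟨B, hB, hBA⟩⟩ := hdense.nonempty
  obtain rfl := chi_injective hBA
  exact hproper (by simpa using hunion B Bᶜ hA hB)
end

section
/- If an ideal I on ω has the Baire property as a subset of 2^ω, then I is meager. -/
/-!
If `chi '' I` were non-meagre, the Baire property would make it comeagre in a basic cylinder `C`
fixing the coordinates in a finite set `t`. Flipping every bit outside `t` is a homeomorphism
mapping `C` into itself, so by the Baire category theorem some `chi A` in `C` is flipped to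
some `chi B` with `A, B ∈ I`. But then `A ∪ B ∪ t = ℕ` lies in `I`.
-/

open Set Filter
open scoped Classical

/-- A set has the Baire property if it differs from an open set by a meager set. -/
def HasBaireProperty {X : Type*} [TopologicalSpace X] (s : Set X) : Prop :=
  ∃ u : Set X, IsOpen u ∧ IsMeagre (symmDiff s u)

lemma HasBaireProperty.exists_isOpen_nonempty_isMeagre_diff {X : Type*} [TopologicalSpace X]
    {s : Set X} (hs : HasBaireProperty s) (hs_not : ¬IsMeagre s) :
    ∃ u : Set X, IsOpen u ∧ u.Nonempty ∧ IsMeagre (u \ s) := by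
  obtain ⟨u, hu, hsu⟩ := hs
  rcases u.eq_empty_or_nonempty with rfl | hne
  · rw [← bot_eq_empty, symmDiff_bot] at hsu
    exact absurd hsu hs_not
  · exact ⟨u, hu, hne, hsu.mono subset_union_right⟩

lemma nonempty_inter_of_isMeagre_diff {X : Type*} [TopologicalSpace X] [BaireSpace X]
    {u s : Set X} (hu : IsOpen u) (hne : u.Nonempty) (hus : IsMeagre (u \ s)) :
    (u ∩ s).Nonempty := by
  by_contra h
  rw [not_nonempty_iff_eq_empty, ← disjoint_iff_inter_eq_empty] at h
  exact not_isMeagre_of_isOpen hu hne (h.sdiff_eq_left ▸ hus)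

lemma exists_finset_pi_singleton_subset {ι : Type*} {π : ι → Type*}
    [∀ i, TopologicalSpace (π i)] {u : Set (∀ i, π i)} (hu : IsOpen u) {x : ∀ i, π i}
    (hx : x ∈ u) : ∃ t : Finset ι, (t : Set ι).pi (fun i => {x i}) ⊆ u := by
  obtain ⟨t, v, hv, hvu⟩ := isOpen_pi_iff.1 hu x hx
  exact ⟨t, (pi_mono fun i hi => singleton_subset_iff.2 (hv i hi).2).trans hvu⟩

section FlipOutside

variable {ι : Type*}

noncomputable def flipOutside (t : Set ι) : (ι → Bool) ≃ₜ (ι → Bool) where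
  toFun x i := if i ∈ t then x i else !x i
  invFun x i := if i ∈ t then x i else !x i
  left_inv x := by funext i; dsimp only; split_ifs <;> simp
  right_inv x := by funext i; dsimp only; split_ifs <;> simp
  continuous_toFun := continuous_pi fun i => by split_ifs <;> fun_prop
  continuous_invFun := continuous_pi fun i => by split_ifs <;> fun_prop

lemma flipOutside_apply_of_mem {t : Set ι} {i : ι} (hi : i ∈ t) (x : ι → Bool) :
    flipOutside t x i = x i :=
  if_pos hi

lemma flipOutside_apply_of_notMem {t : Set ι} {i : ι} (hi : i ∉ t) (x : ι → Bool) :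
    flipOutside t x i = !x i :=
  if_neg hi

lemma mapsTo_flipOutside_pi (t : Set ι) (p : ι → Set Bool) :
    MapsTo (flipOutside t) (t.pi p) (t.pi p) := fun x hx i hi => by
  rw [flipOutside_apply_of_mem hi]
  exact hx i hi

end FlipOutside

lemma chi_eq_true_iff {A : Set ℕ} {n : ℕ} : chi A n = true ↔ n ∈ A := by
  simp [chi]

lemma IsIdealOnNat.disjoint_image_chi_preimage_flipOutside {I : Set (Set ℕ)}
    (hI : IsIdealOnNat I) {t : Set ℕ} (ht : t.Finite) :
    Disjoint (chi '' I) (flipOutside t ⁻¹' (chi '' I)) := by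
  obtain ⟨hfin, -, hunion, huniv⟩ := hI
  refine disjoint_left.2 ?_
  rintro - ⟨A, hA, rfl⟩ ⟨B, hB, hAB⟩
  suffices A ∪ B ∪ t = univ from huniv (this ▸ hunion _ _ (hunion A B hA hB) (hfin t ht))
  refine eq_univ_of_forall fun n => ?_
  by_cases hn : n ∈ t
  · exact Or.inr hn
  · have hBn : chi B n = !chi A n := by rw [hAB, flipOutside_apply_of_notMem hn]
    cases hAn : chi A n
    · exact Or.inl (Or.inr (chi_eq_true_iff.1 (by rw [hBn, hAn]; rfl)))
    · exact Or.inl (Or.inl (chi_eq_true_iff.1 hAn))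

/-- If an ideal on ω has the Baire property, then it is meager. -/
theorem ideal_with_baire_property_is_meager (I : Set (Set ℕ)) (hI : IsIdealOnNat I)
    (hBP : HasBaireProperty (chi '' I)) : IsMeagre (chi '' I) := by
  by_contra hS
  obtain ⟨u, hu, ⟨x, hx⟩, hus⟩ := hBP.exists_isOpen_nonempty_isMeagre_diff hS
  obtain ⟨t, hCu⟩ := exists_finset_pi_singleton_subset hu hx
  set C := (t : Set ℕ).pi fun i => {x i}
  set h := flipOutside (t : Set ℕ)
  have hC : IsOpen C := isOpen_set_pi t.finite_toSet fun _ _ => isOpen_discrete _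
  have hCS : IsMeagre (C \ chi '' I) := hus.mono (sdiff_subset_sdiff_left hCu)
  have hChS : IsMeagre (C \ h ⁻¹' (chi '' I)) := by
    refine (hCS.preimage_of_isOpenMap h.continuous h.isOpenMap).mono ?_
    rw [preimage_sdiff]
    exact sdiff_subset_sdiff_left (mapsTo_flipOutside_pi _ _)
  obtain ⟨y, -, hyS, hyhS⟩ := nonempty_inter_of_isMeagre_diff hC ⟨x, fun _ _ => rfl⟩
    (by rw [sdiff_inter]; exact hCS.union hChS)
  exact disjoint_left.1 (hI.disjoint_image_chi_preimage_flipOutside t.finite_toSet) hyS hyhS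
end

section
/- A filter F on ω is non-meager (as a subset of 2^ω) if and only if for every interval partition {P_n : n ∈ ω} of ω there is X ∈ F such that X ∩ P_n = ∅ for infinitely many n. -/
open Set Filter
open scoped Classical

/-- A filter on ω containing all cofinite sets. -/
def IsFilterOnNat (F : Set (Set ℕ)) : Prop :=
  (∀ A : Set ℕ, Aᶜ.Finite → A ∈ F) ∧
  (∀ A B : Set ℕ, A ∈ F → A ⊆ B → B ∈ F) ∧
  (∀ A B : Set ℕ, A ∈ F → B ∈ F → A ∩ B ∈ F) ∧
  (∅ : Set ℕ) ∉ F

/-- `p` codes the interval partition of ω into the consecutive intervals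
`[p n, p (n+1))`. -/
def IntervalPartition (p : ℕ → ℕ) : Prop := p 0 = 0 ∧ StrictMono p

/-!
For an interval partition `p` and patterns `z n` on its blocks, the points of `2^ω` that agree
with `z n` on the `n`-th block for infinitely many `n` form a dense `G_δ`. Conversely, every
meagre set misses such a set for suitable `p` and `z`: an open dense set `U` contains, above any
`k`, a block `[k, m)` and a pattern on it that forces membership in `U` whatever happens below `k`,
because there are only finitely many prefixes of length `k`.

So a non-meagre filter contains some `X` whose characteristic function vanishes on infinitely many
blocks. If instead `F` is meagre, take `p` and `z` for it and `X ∈ F` missing infinitely many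
blocks; writing `z` into those blocks enlarges `X` to a `Y ∈ F` matching `z` infinitely often,
which is impossible.
-/

open PiNat

lemma inter_nonempty_of_not_isMeagre {X : Type*} [TopologicalSpace X] {s t : Set X}
    (hs : ¬ IsMeagre s) (ht : t ∈ residual X) : (s ∩ t).Nonempty := by
  have htc : IsMeagre tᶜ := show tᶜᶜ ∈ residual X by rwa [compl_compl]
  by_contra h
  exact hs (htc.mono fun x hx hxt => h ⟨x, hx, hxt⟩)

lemma exists_isOpen_dense_iInter_subset_of_mem_residual {X : Type*} [TopologicalSpace X]
    {s : Set X} (hs : s ∈ residual X) :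
    ∃ U : ℕ → Set X, (∀ n, IsOpen (U n)) ∧ (∀ n, Dense (U n)) ∧ ⋂ n, U n ⊆ s := by
  obtain ⟨S, hSo, hSd, hSc, hSs⟩ := mem_residual_iff.1 hs
  obtain ⟨U, hU⟩ := (hSc.insert univ).exists_eq_range (insert_nonempty _ _)
  have hUS : ∀ n, U n = univ ∨ U n ∈ S := fun n => by
    rw [← mem_insert_iff, hU]
    exact mem_range_self n
  refine ⟨U, fun n => ?_, fun n => ?_, ?_⟩
  · rcases hUS n with h | h
    exacts [h ▸ isOpen_univ, hSo _ h]
  · rcases hUS n with h | h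
    exacts [h ▸ dense_univ, hSd _ h]
  · rw [← sInter_range, ← hU, sInter_insert, univ_inter]
    exact hSs

lemma exists_intervalPartition_forall {P : ℕ → ℕ → ℕ → Prop}
    (h : ∀ n k, ∃ m, k < m ∧ P n k m) : ∃ p, IntervalPartition p ∧ ∀ n, P n (p n) (p (n + 1)) := by
  choose m hm hP using h
  let p : ℕ → ℕ := fun n => Nat.rec 0 (fun n pn => m n pn) n
  exact ⟨p, ⟨rfl, strictMono_nat_of_lt_succ fun n => hm n (p n)⟩, fun n => hP n (p n)⟩

section CantorSpace

variable {α : Type*}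

def frequentlyMatching (p : ℕ → ℕ) (z : ℕ → ℕ → α) : Set (ℕ → α) :=
  {x | ∃ᶠ n in atTop, ∀ i ∈ Ico (p n) (p (n + 1)), x i = z n i}

def splice (k : ℕ) (s : Fin k → α) (x : ℕ → α) : ℕ → α :=
  fun i => if h : i < k then s ⟨i, h⟩ else x i

lemma splice_splice {k : ℕ} (s t : Fin k → α) (x : ℕ → α) :
    splice k s (splice k t x) = splice k s x := by
  ext i
  by_cases h : i < k <;> simp [splice, h]

lemma splice_self (k : ℕ) (x : ℕ → α) : splice k (fun j => x j) x = x := by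
  ext i
  by_cases h : i < k <;> simp [splice, h]

variable [TopologicalSpace α]

lemma continuous_splice {k : ℕ} (s : Fin k → α) : Continuous (splice k s) :=
  continuous_pi fun i => by
    by_cases h : i < k
    · simpa [splice, h] using continuous_const
    · simpa [splice, h] using continuous_apply i

variable [DiscreteTopology α]

lemma isOpen_setOf_forall_mem_Ico_eq (a b : ℕ) (w : ℕ → α) :
    IsOpen {x : ℕ → α | ∀ i ∈ Ico a b, x i = w i} :=
  show IsOpen ((Ico a b).pi fun i => {w i}) from
    isOpen_set_pi (finite_Ico a b) fun _ _ => isOpen_discrete _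

lemma frequentlyMatching_mem_residual {p : ℕ → ℕ} (hp : Tendsto p atTop atTop)
    (z : ℕ → ℕ → α) : frequentlyMatching p z ∈ residual (ℕ → α) := by
  set D : ℕ → Set (ℕ → α) := fun m => ⋃ n ≥ m, {x | ∀ i ∈ Ico (p n) (p (n + 1)), x i = z n i}
  have hD : frequentlyMatching p z = ⋂ m, D m := by
    ext x
    simp [frequentlyMatching, D, frequently_atTop]
  have hDo : ∀ m, IsOpen (D m) := fun m =>
    isOpen_biUnion fun n _ => isOpen_setOf_forall_mem_Ico_eq _ _ _
  have hDd : ∀ m, Dense (D m) := by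
    intro m
    rw [(isTopologicalBasis_cylinders _).dense_iff]
    rintro _ ⟨x, N, rfl⟩ -
    obtain ⟨n, hNn, hmn⟩ := ((hp.eventually_ge_atTop N).and (eventually_ge_atTop m)).exists
    refine ⟨fun i => if i ∈ Ico (p n) (p (n + 1)) then z n i else x i, ?_, ?_⟩
    · exact mem_cylinder_iff.2 fun i hi => if_neg fun h => (hi.trans_le hNn).not_ge h.1
    · exact mem_biUnion hmn fun i hi => if_pos hi
  rw [hD]
  exact countable_iInter_mem.2 fun m => residual_of_dense_open (hDo m) (hDd m)

lemma dense_preimage_splice {U : Set (ℕ → α)} (hU : Dense U) {k : ℕ} (s : Fin k → α) :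
    Dense (splice k s ⁻¹' U) := by
  rw [(isTopologicalBasis_cylinders _).dense_iff]
  rintro _ ⟨x, n, rfl⟩ -
  obtain ⟨y, hyx, hyU⟩ := hU.inter_open_nonempty (cylinder (splice k s x) (max n k))
    (isOpen_cylinder _ _ _) ⟨_, self_mem_cylinder _ _⟩
  rw [mem_cylinder_iff] at hyx
  refine ⟨splice k (fun j => x j) y, mem_cylinder_iff.2 fun i hi => ?_, ?_⟩
  · by_cases h : i < k
    · simp [splice, h]
    · simpa [splice, h] using hyx i (by omega)
  · have hys : (fun j : Fin k => y j) = s := funext fun j => by simpa [splice] using hyx j (by omega)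
    rwa [mem_preimage, splice_splice, ← hys, splice_self]

variable [Finite α] [Nonempty α]

lemma exists_block_forall_mem {U : Set (ℕ → α)} (hUo : IsOpen U) (hUd : Dense U) (k : ℕ) :
    ∃ m, k < m ∧ ∃ z : ℕ → α, ∀ y : ℕ → α, (∀ i ∈ Ico k m, y i = z i) → y ∈ U := by
  have hVo : IsOpen (⋂ s : Fin k → α, splice k s ⁻¹' U) :=
    isOpen_iInter_of_finite fun s => hUo.preimage (continuous_splice s)
  have hVd : Dense (⋂ s : Fin k → α, splice k s ⁻¹' U) :=
    dense_iInter_of_isOpen (fun s => hUo.preimage (continuous_splice s))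
      fun s => dense_preimage_splice hUd s
  obtain ⟨x, hx⟩ := hVd.nonempty
  obtain ⟨_, ⟨z, n, rfl⟩, -, hzV⟩ :=
    (isTopologicalBasis_cylinders _).exists_subset_of_mem_open hx hVo
  refine ⟨max n (k + 1), by omega, z, fun y hy => ?_⟩
  have hzy : splice k (fun j => z j) y ∈ cylinder z n := mem_cylinder_iff.2 fun i hi => by
    by_cases h : i < k
    · simp [splice, h]
    · simpa [splice, h] using hy i ⟨by omega, by omega⟩
  simpa [splice_splice, splice_self] using mem_iInter.1 (hzV hzy) fun j => y j

theorem exists_intervalPartition_disjoint_frequentlyMatching {M : Set (ℕ → α)}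
    (hM : IsMeagre M) :
    ∃ p, IntervalPartition p ∧ ∃ z : ℕ → ℕ → α, Disjoint (frequentlyMatching p z) M := by
  obtain ⟨U, hUo, hUd, hU⟩ := exists_isOpen_dense_iInter_subset_of_mem_residual hM
  obtain ⟨p, hp, hpz⟩ := exists_intervalPartition_forall fun n k =>
    exists_block_forall_mem ((finite_Iic n).isOpen_biInter fun j _ => hUo j)
      (dense_biInter_of_isOpen (fun j _ => hUo j) (finite_Iic n).countable fun j _ => hUd j) k
  choose z hz using hpz
  refine ⟨p, hp, z, disjoint_left.2 fun y hy => hU (mem_iInter.2 fun j => ?_)⟩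
  obtain ⟨n, hjn, hyn⟩ := frequently_atTop.1 hy j
  exact mem_iInter₂.1 (hz n y hyn) j hjn

end CantorSpace

lemma chi_mem_frequentlyMatching_false_iff {p : ℕ → ℕ} {X : Set ℕ} :
    chi X ∈ frequentlyMatching p (fun _ _ => false) ↔
      {n : ℕ | X ∩ Ico (p n) (p (n + 1)) = ∅}.Infinite := by
  have hblock (n : ℕ) : (∀ i ∈ Ico (p n) (p (n + 1)), chi X i = false) ↔
      X ∩ Ico (p n) (p (n + 1)) = ∅ := by
    simp only [chi, Bool.ite_eq_false_distrib, eq_empty_iff_forall_notMem, mem_inter_iff]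
    grind
  simp only [frequentlyMatching, mem_ofPred_eq, hblock, Nat.frequently_atTop_iff_infinite]

lemma exists_superset_chi_mem_frequentlyMatching {p : ℕ → ℕ} (hp : Monotone p)
    (z : ℕ → ℕ → Bool) {X : Set ℕ} (hX : {n : ℕ | X ∩ Ico (p n) (p (n + 1)) = ∅}.Infinite) :
    ∃ Y, X ⊆ Y ∧ chi Y ∈ frequentlyMatching p z := by
  set K := {n : ℕ | X ∩ Ico (p n) (p (n + 1)) = ∅}
  refine ⟨X ∪ {i | ∃ n ∈ K, i ∈ Ico (p n) (p (n + 1)) ∧ z n i = true}, subset_union_left,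
    (Nat.frequently_atTop_iff_infinite.2 hX).mono fun n hn i hi => ?_⟩
  have hiX : i ∉ X := fun h => (hn.subset ⟨h, hi⟩ : i ∈ (∅ : Set ℕ))
  have hblock : ∀ n', i ∈ Ico (p n') (p (n' + 1)) → n' = n := fun n' hi' => by
    by_contra hne
    exact disjoint_left.1 (hp.pairwise_disjoint_on_Ico_succ hne) hi' hi
  by_cases hzi : z n i = true
  · simpa [chi, hzi] using Or.inr ⟨n, hn, hi, hzi⟩
  · have hiz : ¬ ∃ n' ∈ K, i ∈ Ico (p n') (p (n' + 1)) ∧ z n' i = true :=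
      fun ⟨n', _, hi', hz'⟩ => hzi (hblock n' hi' ▸ hz')
    simp only [chi, mem_union, hiX, mem_ofPred_eq, hiz, or_self, if_false]
    simpa using hzi

/-- Talagrand/Jalali-Naini: a filter is non-meager iff for every interval partition
some member of the filter misses infinitely many intervals. -/
theorem nonmeager_filter_iff_misses_intervals (F : Set (Set ℕ)) (hF : IsFilterOnNat F) :
    ¬ IsMeagre (chi '' F) ↔
      ∀ p : ℕ → ℕ, IntervalPartition p →
        ∃ X ∈ F, {n : ℕ | X ∩ Set.Ico (p n) (p (n + 1)) = ∅}.Infinite := by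
  constructor
  · intro hnm p hp
    obtain ⟨_, ⟨X, hX, rfl⟩, hXp⟩ := inter_nonempty_of_not_isMeagre hnm
      (frequentlyMatching_mem_residual hp.2.tendsto_atTop fun _ _ => false)
    exact ⟨X, hX, chi_mem_frequentlyMatching_false_iff.1 hXp⟩
  · intro h hM
    obtain ⟨p, hp, z, hpz⟩ := exists_intervalPartition_disjoint_frequentlyMatching hM
    obtain ⟨X, hX, hXp⟩ := h p hp
    obtain ⟨Y, hXY, hY⟩ := exists_superset_chi_mem_frequentlyMatching hp.2.monotone z hXp
    exact disjoint_left.1 hpz hY ⟨Y, hF.2.1 X Y hX hXY, rfl⟩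
end

section
/- A filter F on ω is meager (as a subset of 2^ω) if and only if the family of enumeration functions {e_X : X ∈ F} is bounded in (ω^ω, ≤*), where e_X is the increasing enumeration of X. -/
open Set Filter
open scoped Classical

/-
If `F` is meagre, `chi '' F` misses `⋂ k, U k` for a decreasing sequence of dense open sets `U k`.
Cutting `ℕ` into blocks `I k = [n k, n (k + 1))` with patterns `t k` on them such that every point
agreeing with `t k` on `I k` lies in `U k`, each `X ∈ F` meets all but finitely many blocks:
otherwise, filling the missed blocks with `t k` and everything else with `true` gives a superset
of `X`, hence a member of `F`, inside `⋂ k, U k`. Meeting the blocks from `K` on forces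
`e_X j < n (K + j + 1) ≤ n (2 * j + 1)` for `j ≥ K`.

Conversely, if `g` bounds all enumerations, `chi '' F` is covered by the closed sets of sequences
whose `n`-th `true` entry is at position at most `g n` from some `m` on; these contain no finitely
supported sequence, which are dense, so they are nowhere dense.
-/

open Function PiNat

theorem dense_biInter_finset_of_isOpen {X ι : Type*} [TopologicalSpace X] (s : Finset ι)
    {f : ι → Set X} (ho : ∀ i, IsOpen (f i)) (hd : ∀ i, Dense (f i)) :
    Dense (⋂ i ∈ s, f i) := by
  induction s using Finset.induction_on with
  | empty => simp
  | insert i s _ ih =>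
    rw [Finset.set_biInter_insert]
    exact (hd i).inter_of_isOpen_left ih (ho i)

theorem IsMeagre.exists_antitone_isOpen_dense {X : Type*} [TopologicalSpace X] {s : Set X}
    (hs : IsMeagre s) :
    ∃ U : ℕ → Set X, Antitone U ∧ (∀ k, IsOpen (U k)) ∧ (∀ k, Dense (U k)) ∧
      Disjoint s (⋂ k, U k) := by
  obtain ⟨S, hSo, hSd, hSc, hS⟩ := mem_residual_iff.1 hs
  obtain ⟨V, hV⟩ := (hSc.insert univ).exists_eq_range (insert_nonempty _ _)
  have hVS : ∀ i, V i = univ ∨ V i ∈ S := fun i => mem_insert_iff.1 (hV ▸ mem_range_self i)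
  have hVo : ∀ i, IsOpen (V i) := fun i => (hVS i).elim (· ▸ isOpen_univ) (hSo _)
  have hVd : ∀ i, Dense (V i) := fun i => (hVS i).elim (· ▸ dense_univ) (hSd _)
  refine ⟨fun k => ⋂ i ∈ Finset.range (k + 1), V i, fun j k hjk => ?_,
    fun k => isOpen_biInter_finset fun i _ => hVo i,
    fun k => dense_biInter_finset_of_isOpen _ hVo hVd, ?_⟩
  · exact biInter_subset_biInter_left fun i hi => by simp only [Finset.mem_coe, Finset.mem_range] at hi ⊢; omega
  · refine disjoint_compl_right.mono_right fun x hx => hS fun t ht => ?_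
    obtain ⟨i, rfl⟩ : t ∈ range V := hV ▸ mem_insert_of_mem _ ht
    exact mem_iInter₂.1 (mem_iInter.1 hx i) i (by simp)

theorem PiNat.exists_cylinder_subset {E : ℕ → Type*} [∀ n, TopologicalSpace (E n)]
    [∀ n, DiscreteTopology (E n)] {U : Set (∀ n, E n)} (hU : IsOpen U) {y : ∀ n, E n}
    (hy : y ∈ U) : ∃ m, cylinder y m ⊆ U := by
  obtain ⟨_, ⟨z, m, rfl⟩, hyz, hsub⟩ :=
    (isTopologicalBasis_cylinders E).exists_subset_of_mem_open hy hU
  exact ⟨m, mem_cylinder_iff_eq.1 hyz ▸ hsub⟩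

/-- The block pattern is built one prefix `σ` at a time: density of `U` gives a point `y` of `U`
that extends `σ` and the current pattern, and a cylinder around `y` inside `U`; `y` becomes the
new pattern on a longer block. -/
theorem exists_forall_eqOn_Ico_mem_of_finset {U : Set (ℕ → Bool)} (hUo : IsOpen U)
    (hUd : Dense U) (N : ℕ) (S : Finset (Fin N → Bool)) :
    ∃ N' > N, ∃ t : ℕ → Bool, ∀ σ ∈ S, ∀ x : ℕ → Bool, (∀ i : Fin N, x i = σ i) →
      EqOn x t (Ico N N') → x ∈ U := by
  induction S using Finset.induction_on with
  | empty => exact ⟨N + 1, N.lt_succ_self, fun _ => false, by simp⟩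
  | insert σ S _ ih =>
    obtain ⟨N', hN', t, ht⟩ := ih
    let y₀ : ℕ → Bool := fun i => if h : i < N then σ ⟨i, h⟩ else t i
    obtain ⟨y, hy₀, hyU⟩ := hUd.inter_open_nonempty _ (isOpen_cylinder _ y₀ N')
      ⟨y₀, self_mem_cylinder y₀ N'⟩
    obtain ⟨m, hm⟩ := exists_cylinder_subset hUo hyU
    have hyσ : ∀ i (h : i < N), y i = σ ⟨i, h⟩ := fun i h => by
      rw [hy₀ i (h.trans hN')]; simp [y₀, h]
    refine ⟨max N' m, hN'.trans_le (le_max_left _ _), y, ?_⟩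
    simp only [Finset.mem_insert, forall_eq_or_imp]
    refine ⟨fun x hxσ hxy => hm fun i hi => ?_, fun σ' hσ' x hxσ' hxy => ht σ' hσ' x hxσ' ?_⟩
    · by_cases h : i < N
      · rw [hxσ ⟨i, h⟩, hyσ i h]
      · exact hxy ⟨not_lt.1 h, hi.trans_le (le_max_right _ _)⟩
    · intro i hi
      rw [hxy ⟨hi.1, hi.2.trans_le (le_max_left _ _)⟩, hy₀ i hi.2]
      simp [y₀, not_lt.2 hi.1]

theorem exists_forall_eqOn_Ico_mem {U : Set (ℕ → Bool)} (hUo : IsOpen U) (hUd : Dense U)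
    (N : ℕ) : ∃ N' > N, ∃ t : ℕ → Bool, ∀ x : ℕ → Bool, EqOn x t (Ico N N') → x ∈ U := by
  obtain ⟨N', hN', t, ht⟩ := exists_forall_eqOn_Ico_mem_of_finset hUo hUd N Finset.univ
  exact ⟨N', hN', t, fun x => ht (fun i => x i) (Finset.mem_univ _) x fun _ => rfl⟩

theorem exists_strictMono_forall_eqOn_Ico_mem {U : ℕ → Set (ℕ → Bool)}
    (hUo : ∀ k, IsOpen (U k)) (hUd : ∀ k, Dense (U k)) :
    ∃ n : ℕ → ℕ, StrictMono n ∧ ∃ t : ℕ → ℕ → Bool,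
      ∀ k x, EqOn x (t k) (Ico (n k) (n (k + 1))) → x ∈ U k := by
  choose next hnext t ht using fun k => exists_forall_eqOn_Ico_mem (hUo k) (hUd k)
  let n : ℕ → ℕ := fun k => Nat.rec 0 (fun k nk => next k nk) k
  exact ⟨n, strictMono_nat_of_lt_succ fun k => hnext k (n k), fun k => t k (n k),
    fun k => ht k (n k)⟩

theorem chi_apply_eq_true {A : Set ℕ} {i : ℕ} : chi A i = true ↔ i ∈ A := by
  simp [chi]

/-- Inside a block that `X` misses, `Y` copies the block pattern `t k`; everywhere else `Y` is
full, so it contains `X`. -/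
theorem exists_superset_chi_mem_iInter {U : ℕ → Set (ℕ → Bool)} (hU : Antitone U)
    {n : ℕ → ℕ} (hn : StrictMono n) {t : ℕ → ℕ → Bool}
    (ht : ∀ k x, EqOn x (t k) (Ico (n k) (n (k + 1))) → x ∈ U k) {X : Set ℕ}
    (hX : ∃ᶠ k in atTop, Disjoint X (Ico (n k) (n (k + 1)))) :
    ∃ Y, X ⊆ Y ∧ chi Y ∈ ⋂ k, U k := by
  let Y : Set ℕ :=
    {i | ∀ k, Disjoint X (Ico (n k) (n (k + 1))) → i ∈ Ico (n k) (n (k + 1)) → t k i = true}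
  have hblocks : Pairwise (Disjoint on fun k => Ico (n k) (n (k + 1))) := by
    simpa using hn.monotone.pairwise_disjoint_on_Ico_succ
  have hXY : X ⊆ Y := fun i hi k hk hik => absurd hik (disjoint_left.1 hk hi)
  have hmissed : ∀ k, Disjoint X (Ico (n k) (n (k + 1))) → chi Y ∈ U k := by
    refine fun k hk => ht k _ fun i hik => ?_
    have hY : i ∈ Y ↔ t k i = true := by
      refine ⟨fun hi => hi k hk hik, fun hi k' _ hik' => ?_⟩
      obtain rfl : k' = k := by
        by_contra hne
        exact disjoint_left.1 (hblocks hne) hik' hik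
      exact hi
    cases h : t k i <;> simp_all [chi]
  refine ⟨Y, hXY, mem_iInter.2 fun j => ?_⟩
  obtain ⟨k, hjk, hk⟩ := (frequently_atTop.1 hX) j
  exact hU hjk (hmissed k hk)

theorem eventually_le_of_eventually_not_disjoint_Ico {n e : ℕ → ℕ} (hn : StrictMono n)
    (he : StrictMono e) (h : ∀ᶠ k in atTop, ¬Disjoint (range e) (Ico (n k) (n (k + 1)))) :
    ∀ᶠ j in atTop, e j ≤ n (2 * j + 1) := by
  obtain ⟨K, hK⟩ := eventually_atTop.1 h
  have hlt : ∀ j, e j < n (K + j + 1) := by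
    intro j
    induction j with
    | zero =>
      obtain ⟨_, ⟨m, rfl⟩, -, hm⟩ := not_disjoint_iff.1 (hK K le_rfl)
      exact (he.monotone m.zero_le).trans_lt hm
    | succ j ih =>
      obtain ⟨_, ⟨m, rfl⟩, hm₁, hm₂⟩ := not_disjoint_iff.1 (hK (K + j + 1) (by omega))
      have hjm : j < m := he.lt_iff_lt.1 (ih.trans_le hm₁)
      exact (he.monotone hjm).trans_lt hm₂
  filter_upwards [eventually_ge_atTop K] with j hj
  exact (hlt j).le.trans (hn.monotone (by omega))

theorem continuous_count {α : Type*} [TopologicalSpace α] [DiscreteTopology α] (q : α → Prop)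
    [DecidablePred q] (N : ℕ) : Continuous fun x : ℕ → α => Nat.count (fun k => q (x k)) N := by
  induction N with
  | zero => simp [continuous_const]
  | succ N ih =>
    simp only [Nat.count_succ]
    exact ih.add ((continuous_of_discreteTopology (f := fun b => if q b then 1 else 0)).comp
      (continuous_apply N))

theorem dense_setOf_finite_ne {α : Type*} [TopologicalSpace α] (a : α) :
    Dense {x : ℕ → α | {k | x k ≠ a}.Finite} := by
  intro x
  let trunc : ℕ → ℕ → α := fun N k => if k < N then x k else a
  refine mem_closure_of_tendsto (f := trunc) (b := atTop) (tendsto_pi_nhds.2 fun k => ?_)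
    (Eventually.of_forall fun N => (finite_lt_nat N).subset fun k hk => ?_)
  · refine tendsto_const_nhds.congr' ?_
    filter_upwards [eventually_gt_atTop k] with N hN
    simp [trunc, hN]
  · by_contra h
    exact hk (if_neg h)

/-- The sequences whose `n`-th `true` entry sits at position at most `g n` for all `n ≥ m`,
phrased through `Nat.count` so that each condition depends on finitely many coordinates. -/
def boundedEnumSet (g : ℕ → ℕ) (m : ℕ) : Set (ℕ → Bool) :=
  {x | ∀ n, m ≤ n → n < Nat.count (fun k => x k = true) (g n + 1)}

theorem isClosed_boundedEnumSet (g : ℕ → ℕ) (m : ℕ) : IsClosed (boundedEnumSet g m) := by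
  have : boundedEnumSet g m =
      ⋂ n ∈ Ici m, (fun x : ℕ → Bool => Nat.count (fun k => x k = true) (g n + 1)) ⁻¹' Ioi n := by
    ext; simp [boundedEnumSet]
  rw [this]
  exact isClosed_biInter fun n _ => (isClosed_discrete _).preimage (continuous_count (· = true) _)

theorem infinite_of_mem_boundedEnumSet {g : ℕ → ℕ} {m : ℕ} {x : ℕ → Bool}
    (hx : x ∈ boundedEnumSet g m) : {k | x k = true}.Infinite := by
  intro hfin
  have hcard := Nat.count_le_card hfin (g (max m hfin.toFinset.card) + 1)
  have := hx _ (le_max_left m hfin.toFinset.card)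
  omega

theorem isNowhereDense_boundedEnumSet (g : ℕ → ℕ) (m : ℕ) :
    IsNowhereDense (boundedEnumSet g m) := by
  rw [(isClosed_boundedEnumSet g m).isNowhereDense_iff, interior_eq_empty_iff_dense_compl]
  refine (dense_setOf_finite_ne false).mono fun x hx hmem => ?_
  exact infinite_of_mem_boundedEnumSet hmem (by simpa using hx)

theorem mem_boundedEnumSet_of_nth_le {g : ℕ → ℕ} {m : ℕ} {x : ℕ → Bool}
    (hx : {k | x k = true}.Infinite) (h : ∀ n, m ≤ n → Nat.nth (fun k => x k = true) n ≤ g n) :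
    x ∈ boundedEnumSet g m :=
  fun n hn => (Nat.lt_nth_iff_count_lt hx).2 (Nat.lt_succ_of_le (h n hn))

theorem IsFilterOnNat.infinite_of_mem {F : Set (Set ℕ)} (hF : IsFilterOnNat F) {A : Set ℕ}
    (hA : A ∈ F) : A.Infinite := fun hfin => by
  have h := hF.2.2.1 _ _ hA (hF.1 Aᶜ (by rwa [compl_compl]))
  exact hF.2.2.2 (inter_compl_self A ▸ h)

/-- A filter on ω is meager iff the family of increasing enumerations of its
members is bounded in `(ω^ω, ≤*)`. -/
theorem meager_filter_iff_enumerations_bounded (F : Set (Set ℕ)) (hF : IsFilterOnNat F) :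
    IsMeagre (chi '' F) ↔
      ∃ g : ℕ → ℕ, ∀ X ∈ F, ∀ e : ℕ → ℕ, StrictMono e → Set.range e = X →
        ∀ᶠ n in Filter.atTop, e n ≤ g n := by
  constructor
  · intro hmeagre
    obtain ⟨U, hU, hUo, hUd, hFU⟩ := hmeagre.exists_antitone_isOpen_dense
    obtain ⟨n, hn, t, ht⟩ := exists_strictMono_forall_eqOn_Ico_mem hUo hUd
    refine ⟨fun j => n (2 * j + 1), fun X hX e he hXe => ?_⟩
    subst hXe
    refine eventually_le_of_eventually_not_disjoint_Ico hn he (not_frequently.1 fun hmiss => ?_)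
    obtain ⟨Y, hXY, hY⟩ := exists_superset_chi_mem_iInter hU hn ht hmiss
    exact disjoint_left.1 hFU (mem_image_of_mem chi (hF.2.1 _ _ hX hXY)) hY
  · rintro ⟨g, hg⟩
    refine (isMeagre_iUnion fun m => (isNowhereDense_boundedEnumSet g m).isMeagre).mono ?_
    rintro _ ⟨A, hA, rfl⟩
    have hsetOf : {k | chi A k = true} = A := ext fun _ => chi_apply_eq_true
    have hinf : {k | chi A k = true}.Infinite := by rw [hsetOf]; exact hF.infinite_of_mem hA
    obtain ⟨m, hm⟩ := eventually_atTop.1 <| hg A hA _ (Nat.nth_strictMono hinf)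
      ((Nat.range_nth_of_infinite hinf).trans hsetOf)
    exact mem_iUnion.2 ⟨m, mem_boundedEnumSet_of_nth_le hinf hm⟩
end

section
/- Every infinite almost disjoint family A is Katětov below FIN×FIN: there is a function f : ω×ω → ω such that for every X ∈ I(A), the preimage f⁻¹(X) belongs to the ideal FIN×FIN. -/
open Set Filter

def IsADFamily (A : Set (Set ℕ)) : Prop :=
  (∀ a ∈ A, a.Infinite) ∧ ∀ a ∈ A, ∀ b ∈ A, a ≠ b → (a ∩ b).Finite

def adIdeal (A : Set (Set ℕ)) : Set (Set ℕ) :=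
  {X | ∃ F : Finset (Set ℕ), ↑F ⊆ A ∧ (X \ ⋃₀ (↑F : Set (Set ℕ))).Finite}

/-- The ideal FIN×FIN on ω×ω: sets with only finitely many infinite columns. -/
def FinTimesFin : Set (Set (ℕ × ℕ)) :=
  {A | {n : ℕ | {m : ℕ | (n, m) ∈ A}.Infinite}.Finite}

/-!
Enumerate countably many distinct members `a₀, a₁, …` of `A` and send the `n`-th column of
`ω × ω` injectively into `aₙ`. If `X` is almost contained in the union of finitely many members
of `A`, then a column meeting the preimage of `X` infinitely often gives infinitely many points of
`aₙ ∩ X`; by almost disjointness `aₙ` must be one of those finitely many members, so only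
finitely many columns are infinite.
-/

namespace IsADFamily

variable {A : Set (Set ℕ)}

theorem eq_of_infinite_inter (hA : IsADFamily A) {a b : Set ℕ} (ha : a ∈ A) (hb : b ∈ A)
    (hab : (a ∩ b).Infinite) : a = b :=
  of_not_not fun hne => hab (hA.2 a ha b hb hne)

theorem mem_of_infinite_inter_of_diff_finite (hA : IsADFamily A) {F : Finset (Set ℕ)}
    (hFA : ↑F ⊆ A) {X a : Set ℕ} (hXF : (X \ ⋃₀ (↑F : Set (Set ℕ))).Finite) (ha : a ∈ A)
    (haX : (a ∩ X).Infinite) : a ∈ F := by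
  have haF : (a ∩ ⋃₀ (↑F : Set (Set ℕ))).Infinite :=
    (haX.sdiff hXF).mono <| by
      rintro x ⟨⟨hxa, hxX⟩, hx⟩
      exact ⟨hxa, of_not_not fun h => hx ⟨hxX, h⟩⟩
  rw [sUnion_eq_biUnion, inter_iUnion₂] at haF
  obtain ⟨b, hbF, hab⟩ : ∃ b ∈ F, (a ∩ b).Infinite := by
    by_contra! h
    exact haF (F.finite_toSet.biUnion h)
  rwa [hA.eq_of_infinite_inter ha (hFA hbF) hab]

end IsADFamily

theorem Set.Infinite.inter_of_preimage {α β : Type*} {e : α → β} {s X : Set β}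
    (he : e.Injective) (hs : ∀ x, e x ∈ s) (h : (e ⁻¹' X).Infinite) : (s ∩ X).Infinite :=
  (h.image he.injOn).mono <| by
    rw [image_preimage_eq_inter_range, inter_comm]
    exact inter_subset_inter_left X (range_subset_iff.2 hs)

/-- Every infinite AD family is Katětov below FIN×FIN. -/
theorem adIdeal_katetov_below_finTimesFin (A : Set (Set ℕ)) (hA : IsADFamily A)
    (hinf : A.Infinite) :
    ∃ f : ℕ × ℕ → ℕ, ∀ X ∈ adIdeal A, f ⁻¹' X ∈ FinTimesFin := by
  let a : ℕ ↪ A := hinf.natEmbedding A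
  let e : ∀ n, ℕ ↪ (a n : Set ℕ) := fun n => (hA.1 _ (a n).2).natEmbedding _
  refine ⟨fun p => e p.1 p.2, ?_⟩
  rintro X ⟨F, hFA, hXF⟩
  have hcol : ∀ n, {m | (e n m : ℕ) ∈ X}.Infinite → (a n : Set ℕ) ∈ F := fun n hn =>
    hA.mem_of_infinite_inter_of_diff_finite hFA hXF (a n).2 <|
      Set.Infinite.inter_of_preimage (Subtype.val_injective.comp (e n).injective)
        (fun m => (e n m).2) hn
  exact (F.finite_toSet.preimage (Subtype.val_injective.comp a.injective).injOn).subset hcol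
end

section
/- The least cardinality of a block-splitting family equals max{b, s}. -/
open Set Filter

def LeStar (f g : ℕ → ℕ) : Prop := ∀ᶠ n in Filter.atTop, f n ≤ g n

def UnboundedFam (B : Set (ℕ → ℕ)) : Prop := ¬ ∃ g : ℕ → ℕ, ∀ f ∈ B, LeStar f g

noncomputable def bCard : Cardinal :=
  sInf {c : Cardinal | ∃ B : Set (ℕ → ℕ), UnboundedFam B ∧ Cardinal.mk B = c}

def Splits (S X : Set ℕ) : Prop := (X ∩ S).Infinite ∧ (X \ S).Infinite

def SplittingFam (S : Set (Set ℕ)) : Prop :=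
  (∀ s ∈ S, s.Infinite) ∧ ∀ X : Set ℕ, X.Infinite → ∃ s ∈ S, Splits s X

noncomputable def sCard : Cardinal :=
  sInf {c : Cardinal | ∃ S : Set (Set ℕ), SplittingFam S ∧ Cardinal.mk S = c}

/-- `S` block-splits the interval partition coded by `p`. -/
def BlockSplits (S : Set ℕ) (p : ℕ → ℕ) : Prop :=
  {n : ℕ | Set.Ico (p n) (p (n + 1)) ⊆ S}.Infinite ∧
  {n : ℕ | Set.Ico (p n) (p (n + 1)) ∩ S = ∅}.Infinite

/-- A block-splitting family. -/
def BlockSplittingFam (S : Set (Set ℕ)) : Prop :=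
  (∀ s ∈ S, s.Infinite) ∧
  ∀ p : ℕ → ℕ, IntervalPartition p → ∃ s ∈ S, BlockSplits s p

/-!
A block-splitting family is splitting: for infinite `X`, block-split an interval partition whose
intervals all meet `X`. It also induces an unbounded family of no larger size: send `t` to
`k ↦ min {m ≥ k | m ∉ t}`. If `g` bounded all of these, then an interval partition whose
intervals are longer than `g` could not have infinitely many intervals inside any `t`.

Conversely, let `B` be unbounded and `S` splitting. For every interval partition `p` some
`f ∈ B`, made strictly increasing, is not dominated by `g ∘ g` with `g k` the end of the interval
after the one containing `k`; so infinitely many of the intervals `[fⁿ 0, fⁿ⁺¹ 0)` contain a whole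
`p`-interval. Splitting this set of indices by `s ∈ S`, the union of the `f`-intervals indexed by
`s` block-splits `p`. These unions form a block-splitting family of size at most
`𝔟 · 𝔰 = max 𝔟 𝔰`.
-/

/-- `blockIdx p k` is the index of the interval of the partition coded by `p` that contains `k`. -/
def blockIdx (p : ℕ → ℕ) (k : ℕ) : ℕ := Nat.findGreatest (fun n => p n ≤ k) k

theorem blockIdx_mono (p : ℕ → ℕ) : Monotone (blockIdx p) := fun _ _ hab =>
  Nat.findGreatest_mono (fun _ h => h.trans hab) hab

theorem Monotone.eq_of_mem_Ico_succ {p : ℕ → ℕ} (hp : Monotone p) {k m n : ℕ}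
    (hm : k ∈ Ico (p m) (p (m + 1))) (hn : k ∈ Ico (p n) (p (n + 1))) : m = n := by
  by_contra hmn
  exact Set.disjoint_left.1 (hp.pairwise_disjoint_on_Ico_succ hmn) hm hn

namespace IntervalPartition

variable {p : ℕ → ℕ}

theorem mem_Ico_self (hp : IntervalPartition p) (n : ℕ) : p n ∈ Ico (p n) (p (n + 1)) :=
  ⟨le_rfl, hp.2 n.lt_succ_self⟩

theorem mem_Ico_blockIdx (hp : IntervalPartition p) (k : ℕ) :
    k ∈ Ico (p (blockIdx p k)) (p (blockIdx p k + 1)) := by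
  have h0 : p 0 ≤ k := by rw [hp.1]; exact k.zero_le
  refine ⟨Nat.findGreatest_spec (P := fun n => p n ≤ k) k.zero_le h0, ?_⟩
  by_contra! h
  have : blockIdx p k + 1 ≤ blockIdx p k :=
    Nat.le_findGreatest (P := fun n => p n ≤ k) (hp.2.le_apply.trans h) h
  omega

theorem blockIdx_eq_iff (hp : IntervalPartition p) {k n : ℕ} :
    blockIdx p k = n ↔ k ∈ Ico (p n) (p (n + 1)) :=
  ⟨fun h => h ▸ hp.mem_Ico_blockIdx k,
    fun h => hp.2.monotone.eq_of_mem_Ico_succ (hp.mem_Ico_blockIdx k) h⟩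

theorem blockIdx_apply (hp : IntervalPartition p) (n : ℕ) : blockIdx p (p n) = n :=
  hp.blockIdx_eq_iff.2 (hp.mem_Ico_self n)

theorem Ico_subset_of_blockIdx_add_two_le (hp : IntervalPartition p) {a b : ℕ}
    (h : p (blockIdx p a + 2) ≤ b) :
    Ico (p (blockIdx p a + 1)) (p (blockIdx p a + 1 + 1)) ⊆ Ico a b :=
  Ico_subset_Ico (hp.mem_Ico_blockIdx a).2.le h

theorem infinite_preimage_blockIdx (hp : IntervalPartition p) {s : Set ℕ} (hs : s.Infinite) :
    (blockIdx p ⁻¹' s).Infinite :=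
  (hs.image hp.2.injective.injOn).mono <| image_subset_iff.2 fun n hn => by
    simpa only [mem_preimage, hp.blockIdx_apply] using hn

/-- `blockIdx q ⁻¹' s` is the union of the `q`-intervals indexed by `s`. -/
theorem blockSplits_preimage_blockIdx {q : ℕ → ℕ} (hp : IntervalPartition p)
    (hq : IntervalPartition q) {s X : Set ℕ}
    (hX : ∀ n ∈ X, ∃ m, Ico (p m) (p (m + 1)) ⊆ Ico (q n) (q (n + 1))) (hs : Splits s X) :
    BlockSplits (blockIdx q ⁻¹' s) p := by
  choose! m hm using hX
  have hblock : ∀ n ∈ X, ∀ x ∈ Ico (p (m n)) (p (m n + 1)), blockIdx q x = n :=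
    fun n hn x hx => hq.blockIdx_eq_iff.2 (hm n hn hx)
  have hinj : InjOn m X := fun a ha b hb hab => by
    rw [← hblock a ha _ (hp.mem_Ico_self _), hab, hblock b hb _ (hp.mem_Ico_self _)]
  refine ⟨(hs.1.image (hinj.mono inter_subset_left)).mono ?_,
    (hs.2.image (hinj.mono sdiff_subset)).mono ?_⟩
  · rintro _ ⟨n, ⟨hnX, hns⟩, rfl⟩ x hx
    rwa [mem_preimage, hblock n hnX x hx]
  · rintro _ ⟨n, ⟨hnX, hns⟩, rfl⟩
    refine eq_empty_iff_forall_notMem.2 fun x ⟨hx, hxs⟩ => hns ?_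
    rwa [mem_preimage, hblock n hnX x hx] at hxs

end IntervalPartition

theorem intervalPartition_iterate {f : ℕ → ℕ} (hf : ∀ k, k < f k) :
    IntervalPartition (fun n => f^[n] 0) :=
  ⟨rfl, strictMono_nat_of_lt_succ fun n => by
    simpa only [Function.iterate_succ_apply'] using hf _⟩

def majorant (f : ℕ → ℕ) (k : ℕ) : ℕ := k + 1 + ∑ i ∈ Finset.range (k + 1), f i

theorem self_lt_majorant (f : ℕ → ℕ) (k : ℕ) : k < majorant f k := by
  unfold majorant
  omega

theorem lt_majorant (f : ℕ → ℕ) (k : ℕ) : f k < majorant f k := by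
  have := Finset.single_le_sum (fun i _ => (f i).zero_le) (Finset.self_mem_range_succ k)
  unfold majorant
  omega

theorem majorant_strictMono (f : ℕ → ℕ) : StrictMono (majorant f) :=
  strictMono_nat_of_lt_succ fun k => by
    have := Finset.sum_range_succ f (k + 1)
    unfold majorant
    omega

theorem BlockSplits.compl_infinite {t : Set ℕ} {p : ℕ → ℕ} (hp : IntervalPartition p)
    (h : BlockSplits t p) : tᶜ.Infinite :=
  (h.2.image hp.2.injective.injOn).mono <| by
    rintro _ ⟨n, hn, rfl⟩ hpt
    exact eq_empty_iff_forall_notMem.1 hn (p n) ⟨hp.mem_Ico_self n, hpt⟩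

theorem BlockSplits.splits {t X : Set ℕ} {p : ℕ → ℕ} (hp : IntervalPartition p)
    (hX : ∀ n, (Ico (p n) (p (n + 1)) ∩ X).Nonempty) (h : BlockSplits t p) : Splits t X := by
  choose x hx using hX
  have hinj : Function.Injective x :=
    Function.LeftInverse.injective (g := blockIdx p) fun n => hp.blockIdx_eq_iff.2 (hx n).1
  refine ⟨(h.1.image hinj.injOn).mono ?_, (h.2.image hinj.injOn).mono ?_⟩
  · rintro _ ⟨n, hn, rfl⟩
    exact ⟨(hx n).2, hn (hx n).1⟩
  · rintro _ ⟨n, hn, rfl⟩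
    exact ⟨(hx n).2, fun hxt => eq_empty_iff_forall_notMem.1 hn _ ⟨(hx n).1, hxt⟩⟩

theorem exists_intervalPartition_forall_inter_nonempty {X : Set ℕ} (hX : X.Infinite) :
    ∃ p, IntervalPartition p ∧ ∀ n, (Ico (p n) (p (n + 1)) ∩ X).Nonempty := by
  choose x hxX hx using hX.exists_gt
  refine ⟨_, intervalPartition_iterate (f := fun k => x k + 1) fun k => (hx k).trans
    (lt_add_one _), fun n => ⟨_, ⟨(hx _).le, ?_⟩, hxX _⟩⟩
  rw [Function.iterate_succ_apply']
  exact lt_add_one _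

theorem BlockSplittingFam.splittingFam {T : Set (Set ℕ)} (hT : BlockSplittingFam T) :
    SplittingFam T := by
  refine ⟨hT.1, fun X hX => ?_⟩
  obtain ⟨p, hp, hpX⟩ := exists_intervalPartition_forall_inter_nonempty hX
  obtain ⟨t, ht, hsplit⟩ := hT.2 p hp
  exact ⟨t, ht, hsplit.splits hp hpX⟩

noncomputable def nextNotMem (t : Set ℕ) (k : ℕ) : ℕ := sInf {m | k ≤ m ∧ m ∉ t}

theorem nextNotMem_spec {t : Set ℕ} (ht : tᶜ.Infinite) (k : ℕ) :
    k ≤ nextNotMem t k ∧ nextNotMem t k ∉ t := by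
  obtain ⟨m, hm, hkm⟩ := ht.exists_gt k
  exact Nat.sInf_mem (s := {m | k ≤ m ∧ m ∉ t}) ⟨m, hkm.le, hm⟩

theorem BlockSplittingFam.unboundedFam_image_nextNotMem {T : Set (Set ℕ)}
    (hT : BlockSplittingFam T) : UnboundedFam (nextNotMem '' T) := by
  rintro ⟨g, hg⟩
  have hp := intervalPartition_iterate (self_lt_majorant g)
  obtain ⟨t, htT, ht⟩ := hT.2 _ hp
  obtain ⟨K, hK⟩ := eventually_atTop.1 (hg _ (mem_image_of_mem _ htT))
  obtain ⟨n, hn, hKn⟩ := ht.1.exists_gt K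
  set k := (majorant g)^[n] 0
  obtain ⟨hky, hy⟩ := nextNotMem_spec (ht.compl_infinite hp) k
  refine hy (hn ⟨hky, ?_⟩)
  calc nextNotMem t k ≤ g k := hK k (hKn.le.trans hp.2.le_apply)
    _ < majorant g k := lt_majorant g k
    _ = (majorant g)^[n + 1] 0 := (Function.iterate_succ_apply' _ _ _).symm

theorem BlockSplittingFam.bCard_le {T : Set (Set ℕ)} (hT : BlockSplittingFam T) :
    bCard ≤ Cardinal.mk T :=
  (csInf_le' (by exact ⟨_, hT.unboundedFam_image_nextNotMem, rfl⟩)).trans Cardinal.mk_image_le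

theorem BlockSplittingFam.sCard_le {T : Set (Set ℕ)} (hT : BlockSplittingFam T) :
    sCard ≤ Cardinal.mk T :=
  csInf_le' ⟨T, hT.splittingFam, rfl⟩

theorem leStar_comp_of_eventually_iterate_lt {f g : ℕ → ℕ} (hf : StrictMono f)
    (hlt : ∀ k, k < f k) (hg : Monotone g) (h : ∀ᶠ n in atTop, f^[n + 1] 0 < g (f^[n] 0)) :
    LeStar f (g ∘ g) := by
  obtain ⟨N, hN⟩ := eventually_atTop.1 h
  have hq := intervalPartition_iterate hlt
  refine eventually_atTop.2 ⟨f^[N] 0, fun k hk => ?_⟩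
  set n := blockIdx (fun n => f^[n] 0) k
  have hkn := hq.mem_Ico_blockIdx k
  have hNn : N ≤ n := Nat.lt_succ_iff.1 (hq.2.lt_iff_lt.1 (hk.trans_lt hkn.2))
  calc f k ≤ f (f^[n + 1] 0) := (hf hkn.2).le
    _ = f^[n + 1 + 1] 0 := (Function.iterate_succ_apply' f _ 0).symm
    _ ≤ g (f^[n + 1] 0) := (hN (n + 1) (by omega)).le
    _ ≤ g (g (f^[n] 0)) := hg (hN n hNn).le
    _ ≤ g (g k) := hg (hg hkn.1)

theorem UnboundedFam.exists_infinite_Ico_subset {B : Set (ℕ → ℕ)} (hB : UnboundedFam B)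
    {p : ℕ → ℕ} (hp : IntervalPartition p) :
    ∃ f ∈ B, {n | ∃ m, Ico (p m) (p (m + 1)) ⊆
      Ico ((majorant f)^[n] 0) ((majorant f)^[n + 1] 0)}.Infinite := by
  by_contra! h
  set g : ℕ → ℕ := fun k => p (blockIdx p k + 2)
  have hg : Monotone g := fun a b hab =>
    hp.2.monotone (Nat.add_le_add_right (blockIdx_mono p hab) 2)
  refine hB ⟨g ∘ g, fun f hf => ?_⟩
  obtain ⟨N, hN⟩ := (h f hf).bddAbove
  have hjump : ∀ᶠ n in atTop, (majorant f)^[n + 1] 0 < g ((majorant f)^[n] 0) := by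
    filter_upwards [eventually_gt_atTop N] with n hn
    by_contra! hle
    exact (hN ⟨_, hp.Ico_subset_of_blockIdx_add_two_le hle⟩).not_gt hn
  exact (leStar_comp_of_eventually_iterate_lt (majorant_strictMono f) (self_lt_majorant f) hg
    hjump).mono fun k hk => (lt_majorant f k).le.trans hk

theorem UnboundedFam.infinite {B : Set (ℕ → ℕ)} (hB : UnboundedFam B) : B.Infinite := by
  intro hfin
  obtain ⟨g, hg⟩ := hfin.bddAbove
  exact hB ⟨g, fun f hf => Eventually.of_forall (hg hf)⟩

theorem unboundedFam_univ : UnboundedFam (univ : Set (ℕ → ℕ)) := by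
  rintro ⟨g, hg⟩
  obtain ⟨_, hn⟩ := (hg (g + 1) (mem_univ _)).exists
  exact (lt_add_one _).not_ge hn

theorem exists_unboundedFam_mk_eq_bCard :
    ∃ B : Set (ℕ → ℕ), UnboundedFam B ∧ Cardinal.mk B = bCard :=
  csInf_mem (⟨_, univ, unboundedFam_univ, rfl⟩ :
    {c : Cardinal | ∃ B : Set (ℕ → ℕ), UnboundedFam B ∧ Cardinal.mk B = c}.Nonempty)

theorem aleph0_le_bCard : Cardinal.aleph0 ≤ bCard :=
  le_csInf ⟨_, univ, unboundedFam_univ, rfl⟩ <| by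
    rintro _ ⟨B, hB, rfl⟩
    exact Cardinal.infinite_iff.1 hB.infinite.to_subtype

theorem blockSplittingFam_setOf_infinite : BlockSplittingFam {s : Set ℕ | s.Infinite} := by
  have heven : {n : ℕ | Even n}.Infinite :=
    infinite_of_forall_exists_gt fun a => ⟨2 * a + 2, ⟨a + 1, by ring⟩, by omega⟩
  have hodd : {n : ℕ | Even n}ᶜ.Infinite :=
    infinite_of_forall_exists_gt fun a => ⟨2 * a + 1, Nat.not_even_two_mul_add_one a, by omega⟩
  have hsplit : Splits {n | Even n} univ := by
    rw [Splits, univ_inter, ← compl_eq_univ_sdiff]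
    exact ⟨heven, hodd⟩
  refine ⟨fun _ hs => hs, fun p hp => ⟨_, ?_, hp.blockSplits_preimage_blockIdx hp
    (fun n _ => ⟨n, subset_rfl⟩) hsplit⟩⟩
  exact hp.infinite_preimage_blockIdx heven

theorem exists_splittingFam_mk_eq_sCard :
    ∃ S : Set (Set ℕ), SplittingFam S ∧ Cardinal.mk S = sCard :=
  csInf_mem (⟨_, _, blockSplittingFam_setOf_infinite.splittingFam, rfl⟩ :
    {c : Cardinal | ∃ S : Set (Set ℕ), SplittingFam S ∧ Cardinal.mk S = c}.Nonempty)

theorem blockSplittingFam_image2 {B : Set (ℕ → ℕ)} {S : Set (Set ℕ)} (hB : UnboundedFam B)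
    (hS : SplittingFam S) :
    BlockSplittingFam (image2 (fun f s => blockIdx (fun n => (majorant f)^[n] 0) ⁻¹' s) B S) := by
  refine ⟨?_, fun p hp => ?_⟩
  · rintro _ ⟨f, -, s, hs, rfl⟩
    exact (intervalPartition_iterate (self_lt_majorant f)).infinite_preimage_blockIdx (hS.1 s hs)
  · obtain ⟨f, hf, hX⟩ := hB.exists_infinite_Ico_subset hp
    obtain ⟨s, hs, hsX⟩ := hS.2 _ hX
    exact ⟨_, mem_image2_of_mem hf hs, hp.blockSplits_preimage_blockIdx
      (intervalPartition_iterate (self_lt_majorant f)) (fun _ hn => hn) hsX⟩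

theorem exists_blockSplittingFam_mk_le_max :
    ∃ T : Set (Set ℕ), BlockSplittingFam T ∧ Cardinal.mk T ≤ max bCard sCard := by
  obtain ⟨B, hB, hBc⟩ := exists_unboundedFam_mk_eq_bCard
  obtain ⟨S, hS, hSc⟩ := exists_splittingFam_mk_eq_sCard
  refine ⟨_, blockSplittingFam_image2 hB hS, ?_⟩
  calc Cardinal.mk (image2 _ B S) ≤ Cardinal.mk B * Cardinal.mk S := Cardinal.mk_image2_le
    _ = bCard * sCard := by rw [hBc, hSc]
    _ ≤ max (max bCard sCard) Cardinal.aleph0 := Cardinal.mul_le_max _ _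
    _ = max bCard sCard := max_eq_left (aleph0_le_bCard.trans (le_max_left _ _))

/-- The least cardinality of a block-splitting family equals `max {𝔟, 𝔰}`. -/
theorem blockSplitting_number_eq_max_b_s :
    sInf {c : Cardinal | ∃ S : Set (Set ℕ), BlockSplittingFam S ∧ Cardinal.mk S = c} =
      max bCard sCard := by
  obtain ⟨T, hT, hTle⟩ := exists_blockSplittingFam_mk_le_max
  refine le_antisymm ((csInf_le' (by exact ⟨T, hT, rfl⟩)).trans hTle) ?_
  refine le_csInf ⟨_, T, hT, rfl⟩ ?_
  rintro _ ⟨T', hT', rfl⟩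
  exact max_le hT'.bCard_le hT'.sCard_le
end

section
/- Every splitting family of cardinality less than b is an (ω,ω)-splitting family: for every countable sequence (X_n) of infinite subsets of ω there is a member S of the family such that both {n : |X_n ∩ S| = ω} and {n : |X_n \ S| = ω} are infinite. -/
/-!
For each member `s` of the family, let `f_s n` bound the pieces `X n ∩ s` and `X n \ s` whenever
they are finite. Fewer than `𝔟` such functions are dominated by a single `g`. Choose `y n ∈ X n`
above `g n` and `n`, and let `s` split the infinite set `{y n}`. If `X n ∩ s` were finite for
almost all `n`, then for almost all `n` the point `y n` would lie above `f_s n ≥ max (X n ∩ s)`,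
so outside `s`, and `{y n} ∩ s` would be finite; likewise for `X n \ s`.
-/

open Set Filter

theorem exists_forall_leStar_of_mk_lt_bCard {ι : Type} (F : ι → ℕ → ℕ)
    (h : Cardinal.mk ι < bCard) : ∃ g, ∀ i, LeStar (F i) g := by
  by_contra hF
  have hunb : UnboundedFam (range F) := by
    rintro ⟨g, hg⟩
    exact hF ⟨g, fun i => hg _ (mem_range_self i)⟩
  have hle : bCard ≤ Cardinal.mk (range F) := csInf_le' ⟨_, hunb, rfl⟩
  exact (hle.trans Cardinal.mk_range_le).not_gt h

theorem finite_range_inter_of_eventually_notMem {y : ℕ → ℕ} {T : Set ℕ}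
    (h : ∀ᶠ n in atTop, y n ∉ T) : (range y ∩ T).Finite := by
  obtain ⟨N, hN⟩ := eventually_atTop.mp h
  refine ((finite_lt_nat N).image y).subset ?_
  rintro _ ⟨⟨n, rfl⟩, hyn⟩
  exact ⟨n, not_le.mp fun hNn => hN n hNn hyn, rfl⟩

theorem infinite_range_of_forall_lt {y : ℕ → ℕ} (h : ∀ n, n < y n) : (range y).Infinite :=
  infinite_of_not_bddAbove fun ⟨b, hb⟩ => (h b).not_ge (hb (mem_range_self b))

theorem frequently_infinite_inter_of_infinite_range_inter {X : ℕ → Set ℕ} {T : Set ℕ}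
    {g y : ℕ → ℕ} (hyX : ∀ n, y n ∈ X n) (hgy : ∀ n, g n < y n)
    (hg : ∀ᶠ n in atTop, sSup (X n ∩ T) ≤ g n) (hyT : (range y ∩ T).Infinite) :
    ∃ᶠ n in atTop, (X n ∩ T).Infinite := by
  by_contra hfreq
  have hfin : ∀ᶠ n in atTop, (X n ∩ T).Finite := by
    simpa only [not_frequently, not_infinite] using hfreq
  refine hyT (finite_range_inter_of_eventually_notMem ?_)
  filter_upwards [hfin, hg] with n hfin_n hg_n hyn
  have hle : y n ≤ sSup (X n ∩ T) := le_csSup hfin_n.bddAbove ⟨hyX n, hyn⟩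
  exact (hgy n).not_ge (hle.trans hg_n)

/-- Every splitting family of size less than `𝔟` is `(ω,ω)`-splitting: for every
countable sequence of infinite sets, some member of the family has infinite
intersection with infinitely many of them and its complement also does. -/
theorem small_splitting_family_is_omega_omega_splitting (S : Set (Set ℕ))
    (hS : SplittingFam S) (hsmall : Cardinal.mk S < bCard) :
    ∀ X : ℕ → Set ℕ, (∀ n, (X n).Infinite) →
      ∃ s ∈ S, {n : ℕ | (X n ∩ s).Infinite}.Infinite ∧
        {n : ℕ | (X n \ s).Infinite}.Infinite := by
  intro X hX
  obtain ⟨g, hg⟩ := exists_forall_leStar_of_mk_lt_bCard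
    (fun s : S => fun n => sSup (X n ∩ s) ⊔ sSup (X n \ s)) hsmall
  choose y hyX hy using fun n => (hX n).exists_gt (g n + n)
  have hY : (range y).Infinite := infinite_range_of_forall_lt fun n => by linarith [hy n]
  have hpiece : ∀ T : Set ℕ, (range y ∩ T).Infinite → (∀ᶠ n in atTop, sSup (X n ∩ T) ≤ g n) →
      {n | (X n ∩ T).Infinite}.Infinite := fun T hyT hgT =>
    Nat.frequently_atTop_iff_infinite.mp <| frequently_infinite_inter_of_infinite_range_inter
      hyX (fun n => by linarith [hy n]) hgT hyT
  obtain ⟨s, hs, hYs, hYs'⟩ := hS.2 _ hY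
  -- `A \ s` is definitionally `A ∩ sᶜ`, so the second piece is the case `T = sᶜ`.
  exact ⟨s, hs, hpiece s hYs ((hg ⟨s, hs⟩).mono fun n hn => le_sup_left.trans hn),
    hpiece sᶜ hYs' ((hg ⟨s, hs⟩).mono fun n hn => le_sup_right.trans hn)⟩
end

section
/- If an ideal I on ω is Katětov below an ideal J (I ≤_K J) and I is Shelah-Steprāns, then J is Shelah-Steprāns. -/
open Set Filter

/-- `I` is Shelah-Steprāns: for every set `X` of nonempty finite subsets of ω such
that every `A ∈ I` is avoided by some `s ∈ X`, there is an infinite `Y ⊆ X` with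
`⋃ Y ∈ I`. -/
def ShelahSteprans (I : Set (Set ℕ)) : Prop :=
  ∀ X : Set (Set ℕ), (∀ s ∈ X, s.Finite ∧ s.Nonempty) →
    (∀ A ∈ I, ∃ s ∈ X, s ∩ A = ∅) →
    ∃ Y ⊆ X, Y.Infinite ∧ ⋃₀ Y ∈ I

theorem Set.exists_infinite_subset_image_eq {α β : Type*} {g : α → β} {X : Set α} {Y : Set β}
    (hYX : Y ⊆ g '' X) (hY : Y.Infinite) : ∃ Z ⊆ X, Z.Infinite ∧ g '' Z = Y := by
  obtain ⟨Z, hZX, rfl⟩ := subset_image_iff.1 hYX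
  exact ⟨Z, hZX, hY.of_image g, rfl⟩

theorem Set.image_inter_eq_empty_of_inter_preimage_eq_empty {α β : Type*} {f : α → β}
    {s : Set α} {A : Set β} (h : s ∩ f ⁻¹' A = ∅) : f '' s ∩ A = ∅ := by
  rw [← image_inter_preimage, h, image_empty]

theorem Set.sUnion_subset_preimage_sUnion {α β : Type*} {f : α → β} {Y : Set (Set α)}
    {Y' : Set (Set β)} (h : ∀ s ∈ Y, f '' s ∈ Y') : ⋃₀ Y ⊆ f ⁻¹' ⋃₀ Y' :=
  fun _ ⟨s, hs, hx⟩ ↦ ⟨f '' s, h s hs, mem_image_of_mem f hx⟩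

theorem image_positive_of_katetov {α β : Type*} {I : Set (Set β)} {J : Set (Set α)} {f : α → β}
    (hf : ∀ A ∈ I, f ⁻¹' A ∈ J) {X : Set (Set α)} (hX : ∀ A ∈ J, ∃ s ∈ X, s ∩ A = ∅) :
    ∀ A ∈ I, ∃ t ∈ image f '' X, t ∩ A = ∅ := by
  intro A hA
  obtain ⟨s, hs, hsA⟩ := hX _ (hf A hA)
  exact ⟨f '' s, mem_image_of_mem _ hs, image_inter_eq_empty_of_inter_preimage_eq_empty hsA⟩

theorem shelahSteprans_katetov_upward_general (I J : Set (Set ℕ))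
    (hJ : IsIdealOnNat J)
    (f : ℕ → ℕ) (hf : ∀ A ∈ I, f ⁻¹' A ∈ J)
    (hSS : ShelahSteprans I) : ShelahSteprans J := by
  intro X hX hpos
  have hX' : ∀ t ∈ image f '' X, t.Finite ∧ t.Nonempty := by
    rintro _ ⟨s, hs, rfl⟩
    exact ⟨(hX s hs).1.image f, (hX s hs).2.image f⟩
  obtain ⟨Y', hY'X, hY'inf, hY'I⟩ := hSS _ hX' (image_positive_of_katetov hf hpos)
  obtain ⟨Y, hYX, hYinf, rfl⟩ := exists_infinite_subset_image_eq hY'X hY'inf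
  refine ⟨Y, hYX, hYinf, hJ.2.1 _ _ (hf _ hY'I) ?_⟩
  exact sUnion_subset_preimage_sUnion fun s hs ↦ mem_image_of_mem _ hs

/-- Being Shelah-Steprāns is upward closed in the Katětov order. -/
theorem shelahSteprans_katetov_upward (I J : Set (Set ℕ))
    (hI : IsIdealOnNat I) (hJ : IsIdealOnNat J)
    (f : ℕ → ℕ) (hf : ∀ A ∈ I, f ⁻¹' A ∈ J)
    (hSS : ShelahSteprans I) : ShelahSteprans J :=
  shelahSteprans_katetov_upward_general I J hJ f hf hSS
end

section
/- Every non-meager ideal on ω is Shelah-Steprāns. -/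
open Set Filter
open scoped Classical

/-!
Given `X`, pick `t n ∈ X` avoiding `[0, n)`. If some `A ∈ I` contains `t n` for infinitely many
`n`, these `t n` form the required `Y`. Otherwise the characteristic function of every `A ∈ I`
vanishes somewhere on `t k` for all large `k`; for fixed `m`, the functions doing so for all
`k ≥ m` form a closed set with empty interior (a basic open set only constrains finitely many
coordinates, while `t k` lies beyond them for large `k`), so `chi '' I` would be meagre.
-/

theorem chi_eq_false_iff {A : Set ℕ} {n : ℕ} : chi A n = false ↔ n ∉ A := by
  simp [chi]

theorem isClosed_setOf_forall_exists_eq_false {α ι : Type*} {s : ι → Set α}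
    (hs : ∀ k, (s k).Finite) (K : Set ι) :
    IsClosed {f : α → Bool | ∀ k ∈ K, ∃ j ∈ s k, f j = false} := by
  have hK : {f : α → Bool | ∀ k ∈ K, ∃ j ∈ s k, f j = false} =
      ⋂ k ∈ K, ⋃ j ∈ s k, (fun f => f j) ⁻¹' {false} := by
    ext; simp
  rw [hK]
  exact isClosed_biInter fun k _ => (hs k).isClosed_biUnion fun j _ =>
    (isClosed_discrete {false}).preimage (continuous_apply j)

theorem interior_setOf_forall_exists_eq_false_eq_empty {s : ℕ → Set ℕ}
    (hs : ∀ k, s k ⊆ Ici k) (m : ℕ) :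
    interior {f : ℕ → Bool | ∀ k ∈ Ici m, ∃ j ∈ s k, f j = false} = ∅ := by
  refine eq_empty_iff_forall_notMem.2 fun f hf => ?_
  obtain ⟨F, u, hu, hFu⟩ := isOpen_pi_iff.1 isOpen_interior f hf
  let g : ℕ → Bool := fun n => if n ∈ F then f n else true
  have hg : g ∈ (F : Set ℕ).pi u := fun i hi => by
    simpa [g, Finset.mem_coe.1 hi] using (hu i hi).2
  obtain ⟨j, hj, hgj⟩ := interior_subset (hFu hg) (max m (F.sup id + 1)) (le_max_left m _)
  have hjF : j ∉ F := fun hjF => by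
    have hjle : j ≤ F.sup id := Finset.le_sup (f := id) hjF
    have hjge : max m (F.sup id + 1) ≤ j := hs _ hj
    omega
  simp [g, hjF] at hgj

theorem isMeagre_setOf_eventually_exists_eq_false {s : ℕ → Set ℕ}
    (hfin : ∀ k, (s k).Finite) (hs : ∀ k, s k ⊆ Ici k) :
    IsMeagre {f : ℕ → Bool | ∀ᶠ k in atTop, ∃ j ∈ s k, f j = false} := by
  simp only [eventually_atTop, ofPred_exists]
  exact isMeagre_iUnion fun m => IsNowhereDense.isMeagre <|
    (isClosed_setOf_forall_exists_eq_false hfin (Ici m)).isNowhereDense_iff.2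
      (interior_setOf_forall_exists_eq_false_eq_empty hs m)

theorem Set.Infinite.image_of_nonempty_subset_Ici {t : ℕ → Set ℕ} (hfin : ∀ n, (t n).Finite)
    (hne : ∀ n, (t n).Nonempty) (ht : ∀ n, t n ⊆ Ici n) {K : Set ℕ} (hK : K.Infinite) :
    (t '' K).Infinite := by
  intro hfinite
  obtain ⟨b, hb⟩ := (hfinite.sUnion (forall_mem_image.2 fun n _ => hfin n)).bddAbove
  obtain ⟨n, hnK, hbn⟩ := hK.exists_gt b
  obtain ⟨x, hx⟩ := hne n
  have hxb : x ≤ b := hb ⟨t n, mem_image_of_mem t hnK, hx⟩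
  have hnx : n ≤ x := ht n hx
  omega

/-- Every non-meager ideal on ω is Shelah-Steprāns. -/
theorem nonmeager_ideal_is_shelahSteprans (I : Set (Set ℕ)) (hI : IsIdealOnNat I)
    (hnm : ¬ IsMeagre (chi '' I)) : ShelahSteprans I := by
  obtain ⟨hfin, hdown, -, -⟩ := hI
  intro X hX hAvoid
  choose t htX ht using fun n => hAvoid _ (hfin _ (finite_Iio n))
  have htIci : ∀ n, t n ⊆ Ici n := fun n j hj =>
    mem_Ici.2 <| not_lt.1 fun hjn => eq_empty_iff_forall_notMem.1 (ht n) j ⟨hj, hjn⟩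
  by_cases hA : ∃ A ∈ I, {n | t n ⊆ A}.Infinite
  · obtain ⟨A, hAI, hK⟩ := hA
    refine ⟨t '' {n | t n ⊆ A}, image_subset_iff.2 fun n _ => htX n, ?_, ?_⟩
    · exact hK.image_of_nonempty_subset_Ici (fun n => (hX _ (htX n)).1)
        (fun n => (hX _ (htX n)).2) htIci
    · exact hdown A _ hAI (sUnion_subset (forall_mem_image.2 fun n hn => hn))
  · push Not at hA
    refine absurd ((isMeagre_setOf_eventually_exists_eq_false
      (fun n => (hX _ (htX n)).1) htIci).mono ?_) hnm
    rintro _ ⟨A, hAI, rfl⟩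
    filter_upwards [Nat.cofinite_eq_atTop ▸ (hA A hAI).eventually_cofinite_notMem] with k hk
    obtain ⟨j, hj, hjA⟩ := not_subset.1 hk
    exact ⟨j, hj, chi_eq_false_iff.2 hjA⟩
end
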